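/- Let ϕ : (0,∞) → (0,∞) be a continuous function. If a sequence of convex bodies {K_i}_{i=1}^∞ ⊆ 𝒦₀ⁿ converges to K ∈ 𝒦₀ⁿ with respect to the Hausdorff metric, then Ṽ_ϕ(K_i) → Ṽ_ϕ(K) as i → ∞. -/

import Mathlib

open MeasureTheory Metric Set Filter
open scoped ENNReal NNReal Topology RealInnerProductSpace

noncomputable section

/-- The unit sphere `S^{n-1}` in `ℝⁿ`. -/
def unitSphere (n : ℕ) : Set (EuclideanSpace ℝ (Fin n)) :=
  Metric.sphere (0 : EuclideanSpace ℝ (Fin n)) 1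

/-- The spherical Lebesgue (Hausdorff) measure on `S^{n-1}`, i.e. the
`(n-1)`-dimensional Hausdorff measure restricted to the unit sphere. -/
def sphMeasure (n : ℕ) : Measure (EuclideanSpace ℝ (Fin n)) :=
  (μH[(n : ℝ) - 1] : Measure (EuclideanSpace ℝ (Fin n))).restrict (unitSphere n)

/-- `K` is a convex body in `ℝⁿ` with the origin in its interior
(`K ∈ 𝒦₀ⁿ`). -/
def IsConvexBody0 {n : ℕ} (K : Set (EuclideanSpace ℝ (Fin n))) : Prop :=
  IsCompact K ∧ Convex ℝ K ∧ (0 : EuclideanSpace ℝ (Fin n)) ∈ interior K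

/-- The radial function `ρ_K(u) = max {r > 0 : r • u ∈ K}`. -/
def radialFn {n : ℕ} (K : Set (EuclideanSpace ℝ (Fin n))) (u : EuclideanSpace ℝ (Fin n)) : ℝ :=
  sSup {r : ℝ | 0 < r ∧ r • u ∈ K}

/-- The support function `h_K(u) = max {x·u : x ∈ K}`. -/
def suppFn {n : ℕ} (K : Set (EuclideanSpace ℝ (Fin n))) (u : EuclideanSpace ℝ (Fin n)) : ℝ :=
  sSup ((fun x => ⟪x, u⟫) '' K)

/-- The reverse radial Gauss image `α*_K(η)`: unit vectors `x/‖x‖` over boundary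
points `x ∈ ∂K` lying on a supporting hyperplane of `K` with outer normal in `η`. -/
def revGauss {n : ℕ} (K η : Set (EuclideanSpace ℝ (Fin n))) :
    Set (EuclideanSpace ℝ (Fin n)) :=
  {v | ∃ x ∈ frontier K, (∃ u ∈ η, ⟪x, u⟫ = suppFn K u) ∧ v = ‖x‖⁻¹ • x}

/-- The dual Orlicz curvature `C̃_φ(K,η) = (1/n) ∫_{α*_K(η)} φ(ρ_K(u)) du`,
as a set function. -/
def dualCurv {n : ℕ} (φ : ℝ → ℝ) (K η : Set (EuclideanSpace ℝ (Fin n))) : ℝ :=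
  (n : ℝ)⁻¹ * ∫ u in revGauss K η, φ (radialFn K u) ∂(sphMeasure n)

/-- The dual Orlicz quermassintegral `Ṽ_ϕ(K) = (1/n) ∫_{S^{n-1}} ϕ(ρ_K(u)) du`. -/
def dualQuerm {n : ℕ} (ϕ : ℝ → ℝ) (K : Set (EuclideanSpace ℝ (Fin n))) : ℝ :=
  (n : ℝ)⁻¹ * ∫ u, ϕ (radialFn K u) ∂(sphMeasure n)

/-- `μ` is not concentrated in any closed hemisphere. -/
def NotConcentrated {n : ℕ} (μ : Measure (EuclideanSpace ℝ (Fin n))) : Prop :=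
  ∀ ξ ∈ unitSphere n, 0 < ∫ θ, max ⟪ξ, θ⟫ 0 ∂μ

/-- Conditions A1)–A3): `ϕ : (0,∞) → (0,∞)` is strictly decreasing with
`ϕ(0⁺) = ∞`, `ϕ(∞) = 0`, differentiable with `ϕ' < 0`, and
`φ(t) = -ϕ'(t)·t` is (positive and) continuous on `(0,∞)`. -/
def CondA (ϕ φ : ℝ → ℝ) : Prop :=
  StrictAntiOn ϕ (Set.Ioi 0) ∧ (∀ t > (0 : ℝ), 0 < ϕ t) ∧
    Tendsto ϕ (𝓝[>] (0 : ℝ)) atTop ∧ Tendsto ϕ atTop (𝓝 (0 : ℝ)) ∧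
    (∀ t > (0 : ℝ), HasDerivAt ϕ (-(φ t) / t) t) ∧
    (∀ t > (0 : ℝ), 0 < φ t) ∧ ContinuousOn φ (Set.Ioi 0)

/-- Conditions B1)–B3): `ϕ : (0,∞) → (0,∞)` is strictly increasing with
`ϕ(0⁺) = 0`, `ϕ(∞) = ∞`, differentiable with `ϕ' > 0`, and
`φ(t) = ϕ'(t)·t` is (positive and) continuous on `(0,∞)`. -/
def CondB (ϕ φ : ℝ → ℝ) : Prop :=
  StrictMonoOn ϕ (Set.Ioi 0) ∧ (∀ t > (0 : ℝ), 0 < ϕ t) ∧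
    Tendsto ϕ (𝓝[>] (0 : ℝ)) (𝓝 (0 : ℝ)) ∧ Tendsto ϕ atTop atTop ∧
    (∀ t > (0 : ℝ), HasDerivAt ϕ (φ t / t) t) ∧
    (∀ t > (0 : ℝ), 0 < φ t) ∧ ContinuousOn φ (Set.Ioi 0)

/-- The Wulff shape `[f] = ⋂_{u ∈ Ω} {x : x·u ≤ f(u)}`. -/
def wulff {n : ℕ} (Ω : Set (EuclideanSpace ℝ (Fin n))) (f : EuclideanSpace ℝ (Fin n) → ℝ) :
    Set (EuclideanSpace ℝ (Fin n)) :=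
  ⋂ u ∈ Ω, {x | ⟪x, u⟫ ≤ f u}

/-- The convex hull `⟨ρ⟩ = conv {ρ(u) u : u ∈ Ω}`. -/
def sphHull {n : ℕ} (Ω : Set (EuclideanSpace ℝ (Fin n))) (ρ : EuclideanSpace ℝ (Fin n) → ℝ) :
    Set (EuclideanSpace ℝ (Fin n)) :=
  convexHull ℝ ((fun u => ρ u • u) '' Ω)

/-- The set `∂′K` of boundary points of `K` having a unique outer unit normal. -/
def uniqNormalPts {n : ℕ} (K : Set (EuclideanSpace ℝ (Fin n))) :
    Set (EuclideanSpace ℝ (Fin n)) :=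
  {x | x ∈ frontier K ∧ ∃! v, v ∈ unitSphere n ∧ ⟪x, v⟫ = suppFn K v}

/-- The polar body `K* = {x : x·y ≤ 1 for all y ∈ K}`. -/
def polarBody {n : ℕ} (K : Set (EuclideanSpace ℝ (Fin n))) :
    Set (EuclideanSpace ℝ (Fin n)) :=
  {x | ∀ y ∈ K, ⟪x, y⟫ ≤ 1}

/-- `Ω` is a closed subset of `S^{n-1}` not contained in any closed hemisphere. -/
def GoodOmega {n : ℕ} (Ω : Set (EuclideanSpace ℝ (Fin n))) : Prop :=
  Ω ⊆ unitSphere n ∧ IsClosed Ω ∧ ∀ ξ ∈ unitSphere n, ∃ u ∈ Ω, ⟪ξ, u⟫ < 0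

/-! Radial functions of convex bodies are reciprocals of gauges, hence continuous on the sphere.
If `K_i → K` in the Hausdorff metric, `δ_i = d_H(K_i, K)` and `B(0, r) ⊆ K`, convexity gives
`K_i ⊆ (1 + δ_i / r) K`; once `δ_i ≤ r / 2`, also `B(0, r / 2) ⊆ K_i` and so
`K ⊆ (1 + 2 δ_i / r) K_i`. Thus `ρ_{K_i} → ρ_K` pointwise, and eventually all `ρ_{K_i}` take
values in one compact subinterval of `(0, ∞)`, where `ϕ` is bounded. Dominated convergence
finishes the proof, as the `(n - 1)`-dimensional Hausdorff measure of the sphere is finite: near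
each of its points the sphere is a `C¹` graph over a hyperplane, hence a Lipschitz image of a ball
in `ℝⁿ⁻¹`. -/

open Module
open scoped Pointwise

section SphereHausdorffMeasure

variable {E : Type*} [NormedAddCommGroup E] [InnerProductSpace ℝ E]

def sphereGraph (x : E) (w : (ℝ ∙ x)ᗮ) : E :=
  (w : E) + Real.sqrt (1 - ‖w‖ ^ 2) • x

lemma contDiffOn_sphereGraph (x : E) :
    ContDiffOn ℝ 1 (sphereGraph x) (closedBall 0 (1 / 2)) := by
  refine (ℝ ∙ x)ᗮ.subtypeL.contDiff.contDiffOn.add (ContDiffOn.smul ?_ contDiffOn_const)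
  refine ContDiffOn.sqrt (contDiffOn_const.sub (contDiff_norm_sq ℝ).contDiffOn) fun w hw => ?_
  rw [mem_closedBall, dist_zero_right] at hw
  nlinarith [norm_nonneg w]

lemma sphere_inter_subset_image_sphereGraph {x : E} (hx : ‖x‖ = 1) :
    sphere 0 1 ∩ {y | 9 / 10 < ⟪y, x⟫} ⊆ sphereGraph x '' closedBall 0 (1 / 2) := by
  rintro y ⟨hy, hyx⟩
  rw [mem_sphere_zero_iff_norm] at hy
  rw [mem_ofPred_eq] at hyx
  have hw : y - ⟪y, x⟫ • x ∈ (ℝ ∙ x)ᗮ := by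
    rw [Submodule.mem_orthogonal_singleton_iff_inner_right, inner_sub_right,
      real_inner_smul_right, real_inner_self_eq_norm_sq, hx, real_inner_comm]
    ring
  have hnorm : ‖y - ⟪y, x⟫ • x‖ ^ 2 = 1 - ⟪y, x⟫ ^ 2 := by
    rw [norm_sub_sq_real, hy, norm_smul, hx, real_inner_smul_right, Real.norm_eq_abs, mul_one,
      sq_abs]
    ring
  refine ⟨⟨_, hw⟩, ?_, ?_⟩
  · rw [mem_closedBall, dist_zero_right]
    change ‖y - ⟪y, x⟫ • x‖ ≤ 1 / 2
    nlinarith [norm_nonneg (y - ⟪y, x⟫ • x)]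
  · change y - ⟪y, x⟫ • x + Real.sqrt (1 - ‖y - ⟪y, x⟫ • x‖ ^ 2) • x = y
    rw [hnorm, sub_sub_cancel, Real.sqrt_sq (by linarith), sub_add_cancel]

variable [FiniteDimensional ℝ E] [MeasurableSpace E] [BorelSpace E]

theorem hausdorffMeasure_sphere_lt_top :
    μH[(finrank ℝ E : ℝ) - 1] (sphere (0 : E) 1) < ∞ := by
  obtain h | ⟨m, hm⟩ : finrank ℝ E = 0 ∨ ∃ m, finrank ℝ E = m + 1 := by
    cases finrank ℝ E <;> simp
  · have : Subsingleton E := finrank_zero_iff.mp h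
    simp [sphere_eq_empty_of_subsingleton one_ne_zero]
  have : Fact (finrank ℝ E = m + 1) := ⟨hm⟩
  rw [hm, Nat.cast_succ, add_sub_cancel_right]
  refine (isCompact_sphere 0 1).measure_lt_top_of_nhdsWithin fun x hx => ?_
  rw [mem_sphere_zero_iff_norm] at hx
  have hx0 : x ≠ 0 := norm_ne_zero_iff.mp (by rw [hx]; exact one_ne_zero)
  have hnhds : {y : E | 9 / 10 < ⟪y, x⟫} ∈ 𝓝 x := by
    refine (isOpen_lt continuous_const (continuous_id.inner continuous_const)).mem_nhds ?_
    show 9 / 10 < ⟪x, x⟫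
    rw [real_inner_self_eq_norm_sq, hx]; norm_num
  obtain ⟨C, hC⟩ := (contDiffOn_sphereGraph x).exists_lipschitzOnWith one_ne_zero
    (convex_closedBall 0 _) (isCompact_closedBall 0 _)
  have hdim : finrank ℝ (ℝ ∙ x)ᗮ = m := Submodule.finrank_orthogonal_span_singleton hx0
  refine ⟨_, inter_mem_nhdsWithin _ hnhds, ?_⟩
  calc μH[(m : ℝ)] (sphere 0 1 ∩ {y | 9 / 10 < ⟪y, x⟫})
      ≤ μH[(m : ℝ)] (sphereGraph x '' closedBall 0 (1 / 2)) :=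
        measure_mono (sphere_inter_subset_image_sphereGraph hx)
    _ ≤ C ^ (m : ℝ) * μH[(m : ℝ)] (closedBall (0 : (ℝ ∙ x)ᗮ) (1 / 2)) :=
        hC.hausdorffMeasure_image_le (Nat.cast_nonneg m)
    _ < ∞ := by
        refine ENNReal.mul_lt_top (by simp) ?_
        rw [← hdim]
        exact (isCompact_closedBall _ _).measure_lt_top

end SphereHausdorffMeasure

section ConvexApproximation

variable {E : Type*} [NormedAddCommGroup E] [InnerProductSpace ℝ E] {K L : Set E} {r ε : ℝ}

lemma subset_smul_of_forall_exists_dist_le (hL : Convex ℝ L) (hr : 0 < r) (hε : 0 ≤ ε)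
    (hrL : closedBall 0 r ⊆ L) (hKL : ∀ x ∈ K, ∃ y ∈ L, dist x y ≤ ε) :
    K ⊆ (1 + ε / r) • L := by
  intro x hx
  obtain ⟨y, hy, hxy⟩ := hKL x hx
  have hsmall : x - y ∈ (ε / r) • L := by
    refine smul_set_mono hrL ?_
    rw [smul_closedBall _ _ hr.le, smul_zero, Real.norm_of_nonneg (by positivity),
      div_mul_cancel₀ _ hr.ne', mem_closedBall, dist_zero_right, ← dist_eq_norm]
    exact hxy
  rw [hL.add_smul zero_le_one (by positivity), one_smul]
  exact ⟨y, hy, x - y, hsmall, add_sub_cancel y x⟩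

/-- A point `x ∉ K` of the `r`-ball, pushed a distance `ε` away from its nearest point in `K`,
stays in the `(r + ε)`-ball but ends up farther than `ε` from `K`. -/
lemma closedBall_subset_of_forall_exists_dist_le [CompleteSpace E] (hK : Convex ℝ K)
    (hKc : IsClosed K) (hne : K.Nonempty) (hε : 0 ≤ ε)
    (hKr : ∀ x ∈ closedBall 0 (r + ε), ∃ y ∈ K, dist x y ≤ ε) : closedBall 0 r ⊆ K := by
  intro x hx
  by_contra hxK
  obtain ⟨p, hp, hproj⟩ := exists_norm_eq_iInf_of_complete_convex hne hKc.isComplete hK x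
  have hsep := (norm_eq_iInf_iff_real_inner_le_zero hK hp).mp hproj
  set d := ‖x - p‖
  have hd : 0 < d := norm_pos_iff.mpr (sub_ne_zero.mpr fun h => hxK (h ▸ hp))
  set v := d⁻¹ • (x - p)
  have hv : ‖v‖ = 1 := by
    rw [norm_smul, Real.norm_of_nonneg (inv_nonneg.mpr hd.le), inv_mul_cancel₀ hd.ne']
  obtain ⟨y, hy, hxy⟩ := hKr (x + ε • v) (by
    rw [mem_closedBall, dist_zero_right] at hx ⊢
    calc ‖x + ε • v‖ ≤ ‖x‖ + ε := by
          simpa [norm_smul, hv, abs_of_nonneg hε] using norm_add_le x (ε • v)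
      _ ≤ r + ε := by linarith)
  have hxv : ⟪x - p, v⟫ = d := by
    rw [real_inner_smul_right, real_inner_self_eq_norm_sq, sq, ← mul_assoc,
      inv_mul_cancel₀ hd.ne', one_mul]
  have hyv : ⟪y - p, v⟫ ≤ 0 := by
    rw [real_inner_smul_right, real_inner_comm]
    exact mul_nonpos_of_nonneg_of_nonpos (inv_nonneg.mpr hd.le) (hsep y hy)
  have hfar : d + ε ≤ ⟪x + ε • v - y, v⟫ := by
    have : x + ε • v - y = (x - p) + ε • v - (y - p) := by abel
    rw [this, inner_sub_left, inner_add_left, real_inner_smul_left, real_inner_self_eq_norm_sq,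
      hv, hxv]
    linarith
  have hnear : ⟪x + ε • v - y, v⟫ ≤ ε := by
    calc ⟪x + ε • v - y, v⟫ ≤ ‖x + ε • v - y‖ * ‖v‖ := real_inner_le_norm _ _
      _ ≤ ε := by rwa [hv, mul_one, ← dist_eq_norm]
  linarith

end ConvexApproximation

lemma exists_dist_le_hausdorffDist {α : Type*} [PseudoMetricSpace α] {s t : Set α} {x : α}
    (hx : x ∈ s) (ht : IsCompact t) (hne : t.Nonempty) (hst : hausdorffEDist s t ≠ ⊤) :
    ∃ y ∈ t, dist x y ≤ hausdorffDist s t := by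
  obtain ⟨y, hy, hxy⟩ := ht.exists_infDist_eq_dist hne x
  exact ⟨y, hy, hxy ▸ infDist_le_hausdorffDist_of_mem hx hst⟩

section RadialFunction

variable {n : ℕ} {K L : Set (EuclideanSpace ℝ (Fin n))} {u : EuclideanSpace ℝ (Fin n)} {r : ℝ}

namespace IsConvexBody0

lemma mem_nhds_zero (hK : IsConvexBody0 K) : K ∈ 𝓝 0 :=
  mem_interior_iff_mem_nhds.mp hK.2.2

lemma gauge_pos (hK : IsConvexBody0 K) (hu : u ≠ 0) : 0 < gauge K u :=
  (_root_.gauge_pos (absorbent_nhds_zero hK.mem_nhds_zero)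
    (NormedSpace.isVonNBounded_iff ℝ |>.mpr hK.1.isBounded)).mpr hu

lemma gauge_le_one_iff (hK : IsConvexBody0 K) : gauge K u ≤ 1 ↔ u ∈ K := by
  rw [gauge_le_one_iff_mem_closure hK.2.1 hK.mem_nhds_zero, hK.1.isClosed.closure_eq]

lemma exists_closedBall_subset (hK : IsConvexBody0 K) : ∃ r > 0, closedBall 0 r ⊆ K :=
  nhds_basis_closedBall.mem_iff.mp hK.mem_nhds_zero

lemma hausdorffEDist_ne_top (hK : IsConvexBody0 K) (hL : IsConvexBody0 L) :
    hausdorffEDist K L ≠ ⊤ :=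
  hausdorffEDist_ne_top_of_nonempty_of_bounded ⟨0, interior_subset hK.2.2⟩
    ⟨0, interior_subset hL.2.2⟩ hK.1.isBounded hL.1.isBounded

lemma exists_dist_le_hausdorffDist (hK : IsConvexBody0 K) (hL : IsConvexBody0 L)
    {x : EuclideanSpace ℝ (Fin n)} (hx : x ∈ K) : ∃ y ∈ L, dist x y ≤ hausdorffDist K L :=
  _root_.exists_dist_le_hausdorffDist hx hL.1 ⟨0, interior_subset hL.2.2⟩
    (hK.hausdorffEDist_ne_top hL)

end IsConvexBody0

lemma radialFn_eq_inv_gauge (hK : IsConvexBody0 K) (hu : u ≠ 0) :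
    radialFn K u = (gauge K u)⁻¹ := by
  have hg := hK.gauge_pos hu
  have : {r : ℝ | 0 < r ∧ r • u ∈ K} = Ioc 0 (gauge K u)⁻¹ := by
    ext r
    simp only [mem_ofPred_eq, mem_Ioc, and_congr_right_iff]
    intro hr
    rw [← hK.gauge_le_one_iff, gauge_smul_of_nonneg hr.le, smul_eq_mul, ← le_div_iff₀ hg, one_div]
  rw [radialFn, this, csSup_Ioc (inv_pos.mpr hg)]

lemma continuousOn_radialFn (hK : IsConvexBody0 K) : ContinuousOn (radialFn K) {0}ᶜ :=
  ((continuous_gauge hK.2.1 hK.mem_nhds_zero).continuousOn.inv₀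
    fun _ hu => (hK.gauge_pos hu).ne').congr fun _ hu => radialFn_eq_inv_gauge hK hu

lemma radialFn_pos (hK : IsConvexBody0 K) (hu : u ≠ 0) : 0 < radialFn K u := by
  rw [radialFn_eq_inv_gauge hK hu]
  exact inv_pos.mpr (hK.gauge_pos hu)

lemma radialFn_le_mul_of_subset_smul (hK : IsConvexBody0 K) (hL : IsConvexBody0 L) {c : ℝ}
    (hc : 0 < c) (hKL : K ⊆ c • L) (hu : u ≠ 0) : radialFn K u ≤ c * radialFn L u := by
  have h := gauge_mono (absorbent_nhds_zero hK.mem_nhds_zero) hKL u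
  rw [gauge_smul_left_of_nonneg hc.le, Pi.smul_apply, smul_eq_mul] at h
  rw [radialFn_eq_inv_gauge hK hu, radialFn_eq_inv_gauge hL hu, ← div_eq_mul_inv,
    inv_le_comm₀ (hK.gauge_pos hu) (div_pos hc (hL.gauge_pos hu)), inv_div, div_eq_inv_mul]
  exact h

lemma le_radialFn_of_closedBall_subset (hK : IsConvexBody0 K) (hr : 0 < r)
    (hrK : closedBall 0 r ⊆ K) (hu : ‖u‖ = 1) : r ≤ radialFn K u := by
  have hu0 : u ≠ 0 := norm_ne_zero_iff.mp (by rw [hu]; exact one_ne_zero)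
  have h := gauge_mono (absorbent_nhds_zero (closedBall_mem_nhds 0 hr)) hrK u
  rw [gauge_closedBall hr.le, hu] at h
  rw [radialFn_eq_inv_gauge hK hu0, le_inv_comm₀ hr (hK.gauge_pos hu0)]
  simpa using h

lemma radialFn_le_of_closedBall_subset (hK : IsConvexBody0 K) (hL : IsConvexBody0 L)
    (hr : 0 < r) (hrL : closedBall 0 r ⊆ L) (hu : u ≠ 0) :
    radialFn K u ≤ (1 + hausdorffDist K L / r) * radialFn L u :=
  radialFn_le_mul_of_subset_smul hK hL
    (add_pos_of_pos_of_nonneg one_pos (div_nonneg hausdorffDist_nonneg hr.le))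
    (subset_smul_of_forall_exists_dist_le hL.2.1 hr hausdorffDist_nonneg hrL
      fun _ hx => hK.exists_dist_le_hausdorffDist hL hx) hu

lemma closedBall_subset_of_closedBall_add_hausdorffDist_subset (hK : IsConvexBody0 K)
    (hL : IsConvexBody0 L) (h : closedBall 0 (r + hausdorffDist K L) ⊆ L) :
    closedBall 0 r ⊆ K :=
  closedBall_subset_of_forall_exists_dist_le hK.2.1 hK.1.isClosed ⟨0, interior_subset hK.2.2⟩
    hausdorffDist_nonneg fun _ hx => hausdorffDist_comm (s := K) ▸
      hL.exists_dist_le_hausdorffDist hK (h hx)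

end RadialFunction

section SphericalMeasure

variable {n : ℕ}

instance : IsFiniteMeasure (sphMeasure n) where
  measure_univ_lt_top := by
    rw [sphMeasure, Measure.restrict_apply_univ, unitSphere]
    simpa using hausdorffMeasure_sphere_lt_top (E := EuclideanSpace ℝ (Fin n))

lemma ae_mem_unitSphere : ∀ᵐ u ∂(sphMeasure n), u ∈ unitSphere n :=
  ae_restrict_mem isClosed_sphere.measurableSet

lemma ne_zero_of_mem_unitSphere {u : EuclideanSpace ℝ (Fin n)} (hu : u ∈ unitSphere n) :
    u ≠ 0 :=
  ne_of_mem_sphere hu one_ne_zero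

lemma continuousOn_comp_radialFn {K : Set (EuclideanSpace ℝ (Fin n))} (hK : IsConvexBody0 K)
    {ϕ : ℝ → ℝ} (hϕ : ContinuousOn ϕ (Ioi 0)) :
    ContinuousOn (fun u => ϕ (radialFn K u)) (unitSphere n) :=
  hϕ.comp ((continuousOn_radialFn hK).mono fun _ => ne_zero_of_mem_unitSphere) fun _ hu =>
    radialFn_pos hK (ne_zero_of_mem_unitSphere hu)

end SphericalMeasure

section Convergence

variable {n : ℕ} {ι : Type*} {l : Filter ι} {K : ι → Set (EuclideanSpace ℝ (Fin n))}
  {K₀ : Set (EuclideanSpace ℝ (Fin n))} {r : ℝ}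

lemma eventually_closedBall_subset_of_hausdorffDist (hK : ∀ i, IsConvexBody0 (K i))
    (hK₀ : IsConvexBody0 K₀) (hr : 0 < r) (hrK₀ : closedBall 0 r ⊆ K₀)
    (hlim : Tendsto (fun i => hausdorffDist (K i) K₀) l (𝓝 0)) :
    ∀ᶠ i in l, closedBall 0 (r / 2) ⊆ K i := by
  filter_upwards [hlim.eventually (ge_mem_nhds (half_pos hr))] with i hi
  refine closedBall_subset_of_closedBall_add_hausdorffDist_subset (hK i) hK₀
    ((closedBall_subset_closedBall ?_).trans hrK₀)
  linarith

theorem tendsto_radialFn (hK : ∀ i, IsConvexBody0 (K i)) (hK₀ : IsConvexBody0 K₀)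
    (hlim : Tendsto (fun i => hausdorffDist (K i) K₀) l (𝓝 0))
    {u : EuclideanSpace ℝ (Fin n)} (hu : u ≠ 0) :
    Tendsto (fun i => radialFn (K i) u) l (𝓝 (radialFn K₀ u)) := by
  obtain ⟨r, hr, hrK₀⟩ := hK₀.exists_closedBall_subset
  have hr2 : 0 < r / 2 := half_pos hr
  have hupper (i) : radialFn (K i) u ≤ (1 + hausdorffDist (K i) K₀ / r) * radialFn K₀ u :=
    radialFn_le_of_closedBall_subset (hK i) hK₀ hr hrK₀ hu
  have hlower : ∀ᶠ i in l,
      radialFn K₀ u / (1 + hausdorffDist (K i) K₀ / (r / 2)) ≤ radialFn (K i) u := by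
    filter_upwards [eventually_closedBall_subset_of_hausdorffDist hK hK₀ hr hrK₀ hlim] with i hi
    rw [hausdorffDist_comm, div_le_iff₀' (add_pos_of_pos_of_nonneg one_pos
      (div_nonneg hausdorffDist_nonneg hr2.le))]
    exact radialFn_le_of_closedBall_subset hK₀ (hK i) hr2 hi hu
  have hfactor (c : ℝ) : Tendsto (fun i => 1 + hausdorffDist (K i) K₀ / c) l (𝓝 1) := by
    simpa using (hlim.div_const c).const_add 1
  refine tendsto_of_tendsto_of_tendsto_of_le_of_le' ?_ ?_ hlower (Eventually.of_forall hupper)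
  · have h := (tendsto_const_nhds (x := radialFn K₀ u)).div (hfactor (r / 2)) one_ne_zero
    rwa [div_one] at h
  · simpa using (hfactor r).mul_const (radialFn K₀ u)

lemma eventually_forall_radialFn_mem_Icc (hK : ∀ i, IsConvexBody0 (K i))
    (hK₀ : IsConvexBody0 K₀)
    (hlim : Tendsto (fun i => hausdorffDist (K i) K₀) l (𝓝 0)) :
    ∃ a b, 0 < a ∧ ∀ᶠ i in l, ∀ u ∈ unitSphere n, radialFn (K i) u ∈ Icc a b := by
  obtain ⟨r, hr, hrK₀⟩ := hK₀.exists_closedBall_subset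
  obtain ⟨C, hC⟩ := (isCompact_sphere (0 : EuclideanSpace ℝ (Fin n)) 1).exists_bound_of_continuousOn
    ((continuousOn_radialFn hK₀).mono fun _ => ne_zero_of_mem_unitSphere)
  refine ⟨r / 2, 2 * C, half_pos hr, ?_⟩
  filter_upwards [eventually_closedBall_subset_of_hausdorffDist hK hK₀ hr hrK₀ hlim,
    hlim.eventually (ge_mem_nhds hr)] with i hball hδ u hu
  have hu0 := ne_zero_of_mem_unitSphere hu
  refine ⟨le_radialFn_of_closedBall_subset (hK i) (half_pos hr) hball
    (mem_sphere_zero_iff_norm.mp hu), ?_⟩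
  have hfactor : 1 + hausdorffDist (K i) K₀ / r ≤ 2 := by
    linarith [(div_le_one hr).mpr hδ]
  calc radialFn (K i) u ≤ (1 + hausdorffDist (K i) K₀ / r) * radialFn K₀ u :=
        radialFn_le_of_closedBall_subset (hK i) hK₀ hr hrK₀ hu0
    _ ≤ 2 * C := mul_le_mul hfactor ((le_abs_self _).trans (hC u hu))
        (radialFn_pos hK₀ hu0).le zero_le_two

end Convergence

theorem dualQuerm_continuous_general {n : ℕ} (ϕ : ℝ → ℝ)
    (hϕc : ContinuousOn ϕ (Set.Ioi 0))
    (K : ℕ → Set (EuclideanSpace ℝ (Fin n))) (K₀ : Set (EuclideanSpace ℝ (Fin n)))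
    (hKi : ∀ i, IsConvexBody0 (K i)) (hK₀ : IsConvexBody0 K₀)
    (hconv : Tendsto (fun i => Metric.hausdorffDist (K i) K₀) atTop (𝓝 0)) :
    Tendsto (fun i => dualQuerm ϕ (K i)) atTop (𝓝 (dualQuerm ϕ K₀)) := by
  obtain ⟨a, b, ha, hab⟩ := eventually_forall_radialFn_mem_Icc hKi hK₀ hconv
  obtain ⟨M, hM⟩ := isCompact_Icc.exists_bound_of_continuousOn
    (hϕc.mono fun t ht => ha.trans_le ht.1)
  have hpointwise : ∀ᵐ u ∂(sphMeasure n),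
      Tendsto (fun i => ϕ (radialFn (K i) u)) atTop (𝓝 (ϕ (radialFn K₀ u))) := by
    filter_upwards [ae_mem_unitSphere] with u hu
    have hu0 := ne_zero_of_mem_unitSphere hu
    exact ((hϕc.continuousAt (Ioi_mem_nhds (radialFn_pos hK₀ hu0))).tendsto).comp
      (tendsto_radialFn hKi hK₀ hconv hu0)
  have hbound : ∀ᶠ i in atTop, ∀ᵐ u ∂(sphMeasure n), ‖ϕ (radialFn (K i) u)‖ ≤ M := by
    filter_upwards [hab] with i hi
    filter_upwards [ae_mem_unitSphere] with u hu using hM _ (hi u hu)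
  have hmeas (i : ℕ) : AEStronglyMeasurable (fun u => ϕ (radialFn (K i) u)) (sphMeasure n) :=
    (continuousOn_comp_radialFn (hKi i) hϕc).aestronglyMeasurable isClosed_sphere.measurableSet
  exact (tendsto_integral_filter_of_dominated_convergence (fun _ => M)
    (Eventually.of_forall hmeas) hbound (integrable_const M) hpointwise).const_mul _

/-- **Lemma 3.1** (continuity of the dual Orlicz-quermassintegral). If `ϕ : (0,∞) → (0,∞)`
is continuous and `K_i → K` in the Hausdorff metric with `K_i, K ∈ 𝒦₀ⁿ`, then
`Ṽ_ϕ(K_i) → Ṽ_ϕ(K)`. -/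
theorem dualQuerm_continuous {n : ℕ} (hn : 0 < n) (ϕ : ℝ → ℝ)
    (hϕc : ContinuousOn ϕ (Set.Ioi 0)) (hϕp : ∀ t > (0 : ℝ), 0 < ϕ t)
    (K : ℕ → Set (EuclideanSpace ℝ (Fin n))) (K₀ : Set (EuclideanSpace ℝ (Fin n)))
    (hKi : ∀ i, IsConvexBody0 (K i)) (hK₀ : IsConvexBody0 K₀)
    (hconv : Tendsto (fun i => Metric.hausdorffDist (K i) K₀) atTop (𝓝 0)) :
    Tendsto (fun i => dualQuerm ϕ (K i)) atTop (𝓝 (dualQuerm ϕ K₀)) :=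
  dualQuerm_continuous_general ϕ hϕc K K₀ hKi hK₀ hconv
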